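/- For the dissipator 𝓛_L with L = e^{-iκx̂} f(p̂) where f is a bounded real-valued function, the expectation of momentum in a state ρ evolves under 𝓛 as Tr(p̂ 𝓛_L[ρ]) = −ℏκ Tr(f(p̂)² ρ). In particular the induced friction force F(p) = −ℏκ f(p)² is a function of momentum alone. -/

import Mathlib

/-! `L = e^{-iκx̂} f(p̂)` shifts momentum by `ℏκ`, so in the momentum representation `L† g(p̂) L`
is the multiplication by `g(p - ℏκ) f(p)²` while `L†L = f(p̂)²`. Hence the dissipator maps every
function of momentum to the function `(g(p - ℏκ) - g(p)) f(p)²` of momentum; for `g(p) = p` the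
difference is the constant `-ℏκ`. -/

noncomputable section

/-- Momentum operator: multiplication by `p`. -/
def momOp (ψ : ℝ → ℂ) : ℝ → ℂ := fun p => (p : ℂ) * ψ p

/-- L = e^{-iκx̂} f(p̂), with f real-valued. -/
def jumpL (ℏ κ : ℝ) (f : ℝ → ℝ) (ψ : ℝ → ℂ) : ℝ → ℂ :=
  fun p => (f (p + ℏ * κ) : ℂ) * ψ (p + ℏ * κ)

/-- L†. -/
def jumpLdag (ℏ κ : ℝ) (f : ℝ → ℝ) (ψ : ℝ → ℂ) : ℝ → ℂ :=
  fun p => (f p : ℂ) * ψ (p - ℏ * κ)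

/-- Heisenberg (adjoint) form of the dissipator: 𝓛ᵀ[h] = L†hL − ½{L†L, h}. -/
def lindbladT (ℏ κ : ℝ) (f : ℝ → ℝ) (h : (ℝ → ℂ) → (ℝ → ℂ)) : (ℝ → ℂ) → (ℝ → ℂ) :=
  fun ψ =>
    jumpLdag ℏ κ f (h (jumpL ℏ κ f ψ))
      - (1/2 : ℂ) • (jumpLdag ℏ κ f (jumpL ℏ κ f (h ψ)) + h (jumpLdag ℏ κ f (jumpL ℏ κ f ψ)))

def mulOp (g : ℝ → ℂ) (ψ : ℝ → ℂ) : ℝ → ℂ := fun p => g p * ψ p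

theorem momOp_eq_mulOp : momOp = mulOp (↑) := rfl

section Dissipator

variable (ℏ κ : ℝ) (f : ℝ → ℝ) (ψ : ℝ → ℂ) (p : ℝ)

theorem jumpLdag_jumpL_apply :
    jumpLdag ℏ κ f (jumpL ℏ κ f ψ) p = ((f p ^ 2 : ℝ) : ℂ) * ψ p := by
  simp only [jumpLdag, jumpL, sub_add_cancel]
  push_cast
  ring

theorem jumpLdag_mulOp_jumpL_apply (g : ℝ → ℂ) :
    jumpLdag ℏ κ f (mulOp g (jumpL ℏ κ f ψ)) p = g (p - ℏ * κ) * ((f p ^ 2 : ℝ) : ℂ) * ψ p := by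
  simp only [jumpLdag, mulOp, jumpL, sub_add_cancel]
  push_cast
  ring

theorem lindbladT_mulOp_apply (g : ℝ → ℂ) :
    lindbladT ℏ κ f (mulOp g) ψ p = (g (p - ℏ * κ) - g p) * ((f p ^ 2 : ℝ) : ℂ) * ψ p := by
  have hanti_left : jumpLdag ℏ κ f (jumpL ℏ κ f (mulOp g ψ)) p = ((f p ^ 2 : ℝ) : ℂ) * (g p * ψ p) :=
    jumpLdag_jumpL_apply ℏ κ f (mulOp g ψ) p
  have hanti_right : mulOp g (jumpLdag ℏ κ f (jumpL ℏ κ f ψ)) p = g p * (((f p ^ 2 : ℝ) : ℂ) * ψ p) :=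
    congrArg (g p * ·) (jumpLdag_jumpL_apply ℏ κ f ψ p)
  simp only [lindbladT, Pi.sub_apply, Pi.smul_apply, Pi.add_apply, smul_eq_mul,
    jumpLdag_mulOp_jumpL_apply, hanti_left, hanti_right]
  ring

end Dissipator

theorem friction_force_momentum_only_general (ℏ κ : ℝ) (f : ℝ → ℝ) :
    ∀ ψ : ℝ → ℂ, ∀ p : ℝ,
      lindbladT ℏ κ f momOp ψ p = ((-(ℏ * κ) * (f p) ^ 2 : ℝ) : ℂ) * ψ p := by
  intro ψ p
  rw [momOp_eq_mulOp, lindbladT_mulOp_apply]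
  push_cast
  ring

theorem friction_force_momentum_only (ℏ κ : ℝ) (hℏ : 0 < ℏ) (f : ℝ → ℝ)
    (hf : Measurable f) (hfb : ∃ M : ℝ, ∀ p, |f p| ≤ M) :
    ∀ ψ : ℝ → ℂ, ∀ p : ℝ,
      lindbladT ℏ κ f momOp ψ p = ((-(ℏ * κ) * (f p) ^ 2 : ℝ) : ℂ) * ψ p :=
  friction_force_momentum_only_general ℏ κ f

end
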